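/- Let I be a Borel-fixed monomial ideal of S. Then the integral closure Ī of I is again a Borel-fixed monomial ideal. -/

import Mathlib

/-!
Let `I` be a monomial ideal and `f ^ k ∈ I ^ k`. At a vertex `v` of the Newton polytope of `f`
the coefficient of `f ^ k` at `k v` is `(coeff v f) ^ k ≠ 0`, so `x ^ (k v) ∈ I ^ k` because `I ^ k`
is again a monomial ideal. Every exponent `b` of `f` is a convex combination of vertices with
rational weights, `N b = v₁ + ⋯ + v_N`, hence `(x ^ b) ^ (k N) ∈ I ^ (k N)`: all monomials of `f`
lie in the integral closure of `I`, and so does `f`. Now if a ring endomorphism `φ` maps `I` into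
itself and `u ^ k ∈ I ^ k`, then `(φ u) ^ k ∈ I ^ k`, so `φ u` lies in the integral closure;
Borel-fixedness is the case of upper triangular substitutions.

Vertices are treated combinatorially, as the points of a finite set that are not a nontrivial
average of points of the set, so no convex geometry over `ℝ` is needed and `K` may be finite.
-/

open MvPolynomial

/-- An ideal of `K[x_1, …, x_n]` is a monomial ideal if it is generated by monomials. -/
def IsMonomialIdeal {K : Type*} [Field K] {n : ℕ} (I : Ideal (MvPolynomial (Fin n) K)) : Prop :=
  ∃ G : Set (Fin n →₀ ℕ),
    I = Ideal.span ((fun a => (monomial a (1 : K) : MvPolynomial (Fin n) K)) '' G)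

/-- An ideal `I` is Borel-fixed if `φ(I) ⊆ I` for every `K`-algebra endomorphism `φ`
of `K[x_1, …, x_n]` sending `x_j ↦ ∑_{i ≤ j} c i j • x_i` with `c j j ≠ 0` for each `j`
(i.e. `φ` is induced by an invertible upper triangular matrix over `K`). -/
def IsBorelFixed {K : Type*} [Field K] {n : ℕ} (I : Ideal (MvPolynomial (Fin n) K)) : Prop :=
  ∀ c : Fin n → Fin n → K, (∀ j, c j j ≠ 0) →
    ∀ f ∈ I,
      (aeval (fun j : Fin n =>
          ∑ i ∈ Finset.univ.filter (fun i : Fin n => i ≤ j),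
            (C (c i j) * X i : MvPolynomial (Fin n) K))) f ∈ I

/-- The integral closure of a monomial ideal `I`: the ideal generated by all
monomials `u` such that `u ^ k ∈ I ^ k` for some integer `k ≥ 1`. -/
noncomputable def monomialIntegralClosure {K : Type*} [Field K] {n : ℕ}
    (I : Ideal (MvPolynomial (Fin n) K)) : Ideal (MvPolynomial (Fin n) K) :=
  Ideal.span {m | ∃ a : Fin n →₀ ℕ, m = (monomial a (1 : K) : MvPolynomial (Fin n) K) ∧
    ∃ k : ℕ, 1 ≤ k ∧ m ^ k ∈ I ^ k}

open Multiset

section RatConvexHull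

variable {M : Type*} [AddCommMonoid M]

/-- Membership in the convex hull of `T` with rational weights, after clearing denominators. -/
def MemRatConvexHull (T : Set M) (b : M) : Prop :=
  ∃ l : Multiset M, l ≠ 0 ∧ (∀ x ∈ l, x ∈ T) ∧ l.sum = card l • b

/-- Vertex in the combinatorial sense: `v` is not a nontrivial average of points of `S`. -/
def IsVertex (S : Set M) (v : M) : Prop :=
  v ∈ S ∧ ∀ l : Multiset M, (∀ x ∈ l, x ∈ S) → l.sum = card l • v → ∀ x ∈ l, x = v

lemma MemRatConvexHull.mono {T U : Set M} {b : M} (hTU : T ⊆ U) (hb : MemRatConvexHull T b) :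
    MemRatConvexHull U b :=
  let ⟨l, hl0, hlT, hsum⟩ := hb
  ⟨l, hl0, fun x hx => hTU (hlT x hx), hsum⟩

lemma Multiset.exists_merge_averages (l : Multiset M) (p : M → Multiset M)
    (hp : ∀ s ∈ l, p s ≠ 0 ∧ (p s).sum = card (p s) • s) :
    ∃ N : Multiset M, (∀ x, x ∈ N ↔ x ∈ l.bind p) ∧
      ∃ c ≠ 0, card N = c * card l ∧ N.sum = c • l.sum := by
  set c := (l.map (card ∘ p)).prod
  have hdvd : ∀ s ∈ l, card (p s) ∣ c := fun s hs => dvd_prod (mem_map_of_mem (card ∘ p) hs)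
  have hc : c ≠ 0 := prod_ne_zero fun h => by
    obtain ⟨s, hs, h0⟩ := mem_map.1 h
    exact (hp s hs).1 (card_eq_zero.1 h0)
  have hquot : ∀ s ∈ l, c / card (p s) * card (p s) = c := fun s hs =>
    Nat.div_mul_cancel (hdvd s hs)
  refine ⟨l.bind fun s => (c / card (p s)) • p s, fun x => ?_, c, hc, ?_, ?_⟩
  · simp only [mem_bind, mem_nsmul]
    refine exists_congr fun s => and_congr_right fun hs => and_iff_right ?_
    exact fun h => hc (by rw [← hquot s hs, h, zero_mul])
  · rw [card_bind, mul_comm, ← smul_eq_mul, ← sum_replicate, ← map_const']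
    congr 1
    exact map_congr rfl fun s hs => by simp [hquot s hs]
  · rw [sum_bind, smul_sum]
    congr 1
    exact map_congr rfl fun s hs => by rw [sum_nsmul, (hp s hs).2, smul_smul, hquot s hs]

lemma MemRatConvexHull.trans {T U : Set M} {b : M} (hb : MemRatConvexHull T b)
    (hTU : ∀ x ∈ T, MemRatConvexHull U x) : MemRatConvexHull U b := by
  obtain ⟨l, hl0, hlT, hsum⟩ := hb
  choose! p hp0 hpU hpsum using hTU
  obtain ⟨N, hN, c, hc, hcard, hNsum⟩ :=
    exists_merge_averages l p fun s hs => ⟨hp0 s (hlT s hs), hpsum s (hlT s hs)⟩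
  refine ⟨N, fun h => ?_, fun x hx => ?_, by rw [hNsum, hsum, hcard, mul_smul]⟩
  · rw [← card_eq_zero, hcard] at h
    exact hl0 (card_eq_zero.1 ((mul_eq_zero.1 h).resolve_left hc))
  · obtain ⟨s, hs, hxs⟩ := mem_bind.1 ((hN x).1 hx)
    exact hpU s (hlT s hs) x hxs

lemma memRatConvexHull_diff_singleton_of_not_isVertex [IsCancelAdd M] [DecidableEq M]
    {S : Set M} {b : M} (hb : b ∈ S) (h : ¬IsVertex S b) : MemRatConvexHull (S \ {b}) b := by
  simp only [IsVertex, hb, true_and, not_forall] at h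
  obtain ⟨l, hlS, hsum, x, hx, hxb⟩ := h
  have hsplit : replicate (count b l) b + l.filter (· ≠ b) = l := by
    rw [← filter_eq']
    exact filter_add_not _ l
  refine ⟨l.filter (· ≠ b), fun h0 => ?_, fun y hy => ?_, ?_⟩
  · exact notMem_zero x (h0 ▸ mem_filter.2 ⟨hx, hxb⟩)
  · obtain ⟨hyl, hyb⟩ := mem_filter.1 hy
    exact ⟨hlS y hyl, hyb⟩
  · apply add_left_cancel (a := count b l • b)
    rw [← sum_replicate, ← sum_add, hsplit, hsum, sum_replicate, ← add_smul,
      ← card_replicate (count b l) b, ← card_add, hsplit]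

lemma IsVertex.of_diff_singleton [IsAddTorsionFree M] {S : Set M} {b v : M}
    (hv : IsVertex (S \ {b}) v) (hb : MemRatConvexHull (S \ {b}) b) : IsVertex S v := by
  classical
  obtain ⟨l', hl'0, hl'S, hl'sum⟩ := hb
  refine ⟨hv.1.1, fun l hlS hsum => ?_⟩
  -- replace each occurrence of `b` in `l` by `l'`
  let p : M → Multiset M := fun x => if x = b then l' else {x}
  obtain ⟨N, hN, c, -, hcard, hNsum⟩ := exists_merge_averages l p fun s _ => by
    by_cases hs : s = b
    · simp [p, hs, hl'0, hl'sum]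
    · simp [p, hs]
  have hNS : ∀ x ∈ N, x ∈ S \ {b} := fun x hx => by
    obtain ⟨s, hs, hxs⟩ := mem_bind.1 ((hN x).1 hx)
    by_cases hsb : s = b
    · simp only [p, hsb, if_true] at hxs
      exact hl'S x hxs
    · simp only [p, hsb, if_false, mem_singleton] at hxs
      exact ⟨hxs ▸ hlS s hs, hxs ▸ hsb⟩
  have hNv := hv.2 N hNS (by rw [hNsum, hsum, hcard, mul_smul])
  have hpv : ∀ s ∈ l, ∀ x ∈ p s, x = v := fun s hs x hx =>
    hNv x ((hN x).2 (mem_bind.2 ⟨s, hs, hx⟩))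
  intro x hx
  by_cases hxb : x = b
  · have hl'v : ∀ y ∈ l', y = v := by simpa [p, hxb] using hpv x hx
    have : card l' • b = card l' • v := by
      rw [← hl'sum, eq_replicate_card.2 hl'v, sum_replicate, card_replicate]
    exact absurd (nsmul_right_injective (card_pos.2 hl'0 |>.ne') this).symm hv.1.2
  · simpa [p, hxb] using hpv x hx

theorem Finset.memRatConvexHull_isVertex [IsCancelAdd M] [IsAddTorsionFree M] (S : Finset M) :
    ∀ b ∈ S, MemRatConvexHull {v | IsVertex (S : Set M) v} b := by
  classical
  induction S using Finset.strongInduction with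
  | _ S ih =>
    intro b hb
    by_cases hbS : IsVertex (S : Set M) b
    · exact ⟨{b}, singleton_ne_zero b, by simpa using hbS, by simp⟩
    have hbS' := memRatConvexHull_diff_singleton_of_not_isVertex hb hbS
    refine (hbS'.trans fun x hx => ?_).mono fun v hv => IsVertex.of_diff_singleton hv hbS'
    rw [← Finset.coe_erase] at hx ⊢
    exact ih _ (Finset.erase_ssubset hb) x hx

end RatConvexHull

namespace MvPolynomial

variable {σ R : Type*} [CommSemiring R]

lemma exists_multiset_of_mem_support_pow (f : MvPolynomial σ R) (k : ℕ) {q : σ →₀ ℕ}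
    (hq : q ∈ (f ^ k).support) :
    ∃ l : Multiset (σ →₀ ℕ), card l = k ∧ (∀ x ∈ l, x ∈ f.support) ∧ l.sum = q := by
  classical
  induction k generalizing q with
  | zero =>
    rw [pow_zero, mem_support_iff, coeff_one] at hq
    exact ⟨0, rfl, by simp, sum_zero.trans (not_not.1 fun h => hq (if_neg h))⟩
  | succ k ih =>
    obtain ⟨p, hp, x, hx, rfl⟩ := Finset.mem_add.1 (support_mul (f ^ k) f (pow_succ f k ▸ hq))
    obtain ⟨l, hlk, hlf, rfl⟩ := ih hp
    refine ⟨x ::ₘ l, by rw [card_cons, hlk], fun y hy => ?_, by rw [sum_cons, add_comm]⟩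
    rcases mem_cons.1 hy with rfl | hy
    exacts [hx, hlf y hy]

lemma coeff_nsmul_pow_of_isVertex {f : MvPolynomial σ R} {v : σ →₀ ℕ}
    (hv : IsVertex (f.support : Set (σ →₀ ℕ)) v) (k : ℕ) :
    coeff (k • v) (f ^ k) = coeff v f ^ k := by
  classical
  induction k with
  | zero => simp
  | succ k ih =>
    rw [pow_succ, coeff_mul, Finset.sum_eq_single (k • v, v), ih, pow_succ]
    · rintro ⟨p, q⟩ hpq hne
      rw [Finset.HasAntidiagonal.mem_antidiagonal, succ_nsmul] at hpq
      by_contra h0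
      obtain ⟨l, hlk, hlf, rfl⟩ := exists_multiset_of_mem_support_pow f k
        (mem_support_iff.2 (left_ne_zero_of_mul h0))
      have hall := hv.2 (q ::ₘ l)
        (fun x hx => (mem_cons.1 hx).elim (· ▸ mem_support_iff.2 (right_ne_zero_of_mul h0))
          (hlf x))
        (by rw [sum_cons, card_cons, hlk, add_comm q, hpq, succ_nsmul])
      have hlv : l.sum = k • v := by
        rw [eq_replicate_card.2 fun x hx => hall x (mem_cons_of_mem hx), sum_replicate, hlk]
      exact hne (by rw [hlv, hall q (mem_cons_self q l)])
    · intro h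
      exact absurd (Finset.HasAntidiagonal.mem_antidiagonal.2 (succ_nsmul v k).symm) h

lemma monomial_multiset_sum_mem_pow {J : Ideal (MvPolynomial σ R)} {l : Multiset (σ →₀ ℕ)}
    (h : ∀ v ∈ l, monomial v (1 : R) ∈ J) : monomial l.sum (1 : R) ∈ J ^ card l := by
  induction l using Multiset.induction with
  | empty => simp
  | cons a l ih =>
    rw [sum_cons, card_cons, pow_succ', ← mul_one (1 : R), ← monomial_mul]
    exact Ideal.mul_mem_mul (h a (mem_cons_self a l)) (ih fun v hv => h v (mem_cons_of_mem hv))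

end MvPolynomial

section MonomialIdeal

variable {K : Type*} [Field K] {n : ℕ}

lemma IsMonomialIdeal.monomial_mem_of_mem_support {J : Ideal (MvPolynomial (Fin n) K)}
    (hJ : IsMonomialIdeal J) {p : MvPolynomial (Fin n) K} (hp : p ∈ J) {d : Fin n →₀ ℕ}
    (hd : d ∈ p.support) : monomial d (1 : K) ∈ J := by
  obtain ⟨G, rfl⟩ := hJ
  obtain ⟨g, hg, hgd⟩ := mem_ideal_span_monomial_image.1 hp d hd
  exact mem_ideal_span_monomial_image.2 fun x hx =>
    ⟨g, hg, Finset.mem_singleton.1 (support_monomial_subset hx) ▸ hgd⟩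

lemma IsMonomialIdeal.mul {I J : Ideal (MvPolynomial (Fin n) K)} (hI : IsMonomialIdeal I)
    (hJ : IsMonomialIdeal J) : IsMonomialIdeal (I * J) := by
  obtain ⟨G, rfl⟩ := hI
  obtain ⟨H, rfl⟩ := hJ
  open Pointwise in
  refine ⟨G + H, ?_⟩
  rw [Ideal.span_mul_span']
  congr 1
  ext p
  simp [Set.mem_mul, Set.mem_add, monomial_mul]

lemma IsMonomialIdeal.pow {I : Ideal (MvPolynomial (Fin n) K)} (hI : IsMonomialIdeal I) (k : ℕ) :
    IsMonomialIdeal (I ^ k) := by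
  induction k with
  | zero => exact ⟨{0}, by simp⟩
  | succ k ih => exact pow_succ I k ▸ ih.mul hI

lemma monomialIntegralClosure_eq_span (I : Ideal (MvPolynomial (Fin n) K)) :
    monomialIntegralClosure I = Ideal.span ((fun a => monomial a (1 : K)) ''
      {a | ∃ k, 1 ≤ k ∧ monomial a (1 : K) ^ k ∈ I ^ k}) := by
  unfold monomialIntegralClosure
  congr 1
  ext m
  constructor
  · rintro ⟨a, rfl, hk⟩
    exact ⟨a, hk, rfl⟩
  · rintro ⟨a, hk, rfl⟩
    exact ⟨a, rfl, hk⟩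

lemma isMonomialIdeal_monomialIntegralClosure (I : Ideal (MvPolynomial (Fin n) K)) :
    IsMonomialIdeal (monomialIntegralClosure I) :=
  ⟨_, monomialIntegralClosure_eq_span I⟩

lemma IsMonomialIdeal.exists_pow_monomial_mem_pow {I : Ideal (MvPolynomial (Fin n) K)}
    (hI : IsMonomialIdeal I) {f : MvPolynomial (Fin n) K} {k : ℕ} (hk : 1 ≤ k)
    (hf : f ^ k ∈ I ^ k) {b : Fin n →₀ ℕ} (hb : b ∈ f.support) :
    ∃ N, 1 ≤ N ∧ monomial b (1 : K) ^ N ∈ I ^ N := by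
  obtain ⟨l, hl0, hlv, hlb⟩ := f.support.memRatConvexHull_isVertex b hb
  have hvert : ∀ v ∈ l.map (k • ·), monomial v (1 : K) ∈ I ^ k := by
    simp only [mem_map]
    rintro _ ⟨v, hv, rfl⟩
    refine (hI.pow k).monomial_mem_of_mem_support hf ?_
    rw [mem_support_iff, coeff_nsmul_pow_of_isVertex (hlv v hv)]
    exact pow_ne_zero k (mem_support_iff.1 (hlv v hv).1)
  refine ⟨k * card l, Nat.one_le_iff_ne_zero.2 (mul_ne_zero (by omega) (by simpa using hl0)), ?_⟩
  have := monomial_multiset_sum_mem_pow hvert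
  rwa [card_map, ← pow_mul, ← smul_sum, hlb, smul_smul, ← one_pow (k * card l), ← monomial_pow]
    at this

lemma IsMonomialIdeal.mem_monomialIntegralClosure {I : Ideal (MvPolynomial (Fin n) K)}
    (hI : IsMonomialIdeal I) {f : MvPolynomial (Fin n) K} {k : ℕ} (hk : 1 ≤ k)
    (hf : f ^ k ∈ I ^ k) : f ∈ monomialIntegralClosure I := by
  rw [monomialIntegralClosure_eq_span]
  exact mem_ideal_span_monomial_image.2 fun b hb =>
    ⟨b, hI.exists_pow_monomial_mem_pow hk hf hb, le_rfl⟩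

lemma IsMonomialIdeal.monomialIntegralClosure_le_comap {I : Ideal (MvPolynomial (Fin n) K)}
    (hI : IsMonomialIdeal I) (φ : MvPolynomial (Fin n) K →+* MvPolynomial (Fin n) K)
    (hφ : I ≤ I.comap φ) : monomialIntegralClosure I ≤ (monomialIntegralClosure I).comap φ := by
  refine Ideal.span_le.2 ?_
  rintro _ ⟨a, rfl, k, hk, hpow⟩
  refine hI.mem_monomialIntegralClosure hk ?_
  rw [← map_pow]
  exact ((Ideal.pow_right_mono hφ k).trans (Ideal.le_comap_pow φ k)) hpow

end MonomialIdeal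

/-- If `I` is a Borel-fixed monomial ideal, then its integral closure is again a
Borel-fixed monomial ideal. -/
theorem integralClosure_borelFixed {K : Type*} [Field K] {n : ℕ}
    (I : Ideal (MvPolynomial (Fin n) K)) (hmon : IsMonomialIdeal I)
    (hBF : IsBorelFixed I) :
    IsMonomialIdeal (monomialIntegralClosure I) ∧ IsBorelFixed (monomialIntegralClosure I) :=
  ⟨isMonomialIdeal_monomialIntegralClosure I, fun c hc _ hf =>
    hmon.monomialIntegralClosure_le_comap _ (hBF c hc) hf⟩
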